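/- For probability measures μ, ρ on X^∞ and any ε ∈ (0,1): if μ(T^n_μ \ S) > ε' for infinitely many n where S is chosen with ρ(T^n_μ \ S) ≤ ε_n and −log ε_n = o(n) is suitably chosen, then d_n(μ,ρ) ≠ o(n). Equivalently (contrapositive form): if d_n(μ,ρ) = o(n), then one can choose ε_n with −log ε_n = o(n) such that whenever ρ(T^n_μ \ S_n) ≤ ε_n, it follows that μ(T^n_μ \ S_n) → 0. -/

import Mathlib

open MeasureTheory Filter Set
open scoped ENNReal Topology

/-- The cylinder set `[x_{1..n}]` of all infinite sequences over `X` starting with the word `s`. -/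
def cylSet {X : Type*} [MeasurableSpace X] {n : ℕ} (s : Fin n → X) : Set (ℕ → X) :=
  {ω | ∀ i : Fin n, ω (i : ℕ) = s i}

/-- The probability `μ(x_{1..n})` of the word `s` (cylinder probability), as a real number. -/
noncomputable def cylP {X : Type*} [MeasurableSpace X] (μ : Measure (ℕ → X)) {n : ℕ}
    (s : Fin n → X) : ℝ :=
  (μ (cylSet s)).toReal

open scoped Classical in
/-- The `n`-step Kullback-Leibler divergence `d_n(μ,ρ)` between the restrictions of `μ` and `ρ`
to the first `n` observations, with the convention that terms with `μ(x_{1..n}) = 0` vanish. -/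
noncomputable def klDn {X : Type*} [Fintype X] [MeasurableSpace X]
    (μ ρ : Measure (ℕ → X)) (n : ℕ) : ℝ :=
  ∑ s : Fin n → X, if cylP μ s = 0 then 0 else cylP μ s * Real.log (cylP μ s / cylP ρ s)


/-! Split a set `F` of words into those with `μ(x) ≥ e^L ρ(x)` and the rest. The rest has
`μ`-mass at most `e^L ρ(F)`. Each word of the first kind contributes at least `L μ(x)` to `d_n`,
while by `p log (p / q) ≥ p - q` all other words together lower `d_n` by at most `1`; hence the
first kind has `μ`-mass at most `(d_n + 1) / L`. With `L_n = √(n (d_n + 2))` and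
`ε_n = e^{-(2 L_n + 1)}` both parts are `O(√((d_n + 2) / n)) = o(1)`, while `-log ε_n = o(n)`. -/

noncomputable def klTerm (p q : ℝ) : ℝ :=
  if p = 0 then 0 else p * Real.log (p / q)

lemma klDn_eq_sum_klTerm {X : Type*} [Fintype X] [MeasurableSpace X] (μ ρ : Measure (ℕ → X))
    (n : ℕ) : klDn μ ρ n = ∑ s : Fin n → X, klTerm (cylP μ s) (cylP ρ s) := rfl

section KLTerm

open Real

variable {p q : ℝ}

lemma sub_le_klTerm (hp : 0 ≤ p) (hq : 0 ≤ q) (hpq : q = 0 → p = 0) : p - q ≤ klTerm p q := by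
  unfold klTerm
  split_ifs with hp0
  · linarith
  have hp' : 0 < p := hp.lt_of_ne' hp0
  have hq' : 0 < q := hq.lt_of_ne' (mt hpq hp0)
  have hlog : log (q / p) ≤ q / p - 1 := log_le_sub_one_of_pos (div_pos hq' hp')
  rw [← neg_neg (log (p / q)), ← log_inv, inv_div]
  calc p - q = p * (1 - q / p) := by field_simp
    _ ≤ p * -log (q / p) := by gcongr; linarith

lemma mul_le_klTerm {L : ℝ} (hq : 0 ≤ q) (hpq : q = 0 → p = 0) (h : exp L * q ≤ p) :
    L * p ≤ klTerm p q := by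
  unfold klTerm
  split_ifs with hp0
  · simp [hp0]
  have hq' : 0 < q := hq.lt_of_ne' (mt hpq hp0)
  have hp' : 0 < p := (mul_pos (exp_pos L) hq').trans_le h
  rw [mul_comm]
  gcongr
  rw [le_log_iff_exp_le (div_pos hp' hq'), le_div_iff₀ hq']
  exact h

end KLTerm

section FiniteDistributions

open Real

variable {ι : Type*} [Fintype ι] {p q : ι → ℝ}

lemma mul_sum_le_sum_klTerm_add_one (hp : 0 ≤ p) (hq : 0 ≤ q) (hq_sum : ∑ i, q i ≤ 1)
    (hpq : ∀ i, q i = 0 → p i = 0) {L : ℝ} {B : Finset ι} (hB : ∀ i ∈ B, exp L * q i ≤ p i) :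
    L * ∑ i ∈ B, p i ≤ ∑ i, klTerm (p i) (q i) + 1 := by
  classical
  have h_gain : L * ∑ i ∈ B, p i ≤ ∑ i ∈ B, klTerm (p i) (q i) := by
    rw [Finset.mul_sum]
    exact Finset.sum_le_sum fun i hi => mul_le_klTerm (hq i) (hpq i) (hB i hi)
  have h_loss : -1 ≤ ∑ i ∈ Bᶜ, klTerm (p i) (q i) :=
    calc -1 ≤ -∑ i ∈ Bᶜ, q i := by
          gcongr
          exact (Finset.sum_le_sum_of_subset_of_nonneg (Finset.subset_univ _)
            fun i _ _ => hq i).trans hq_sum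
      _ ≤ ∑ i ∈ Bᶜ, (p i - q i) := by
          rw [Finset.sum_sub_distrib]
          linarith [Finset.sum_nonneg fun i (_ : i ∈ Bᶜ) => hp i]
      _ ≤ ∑ i ∈ Bᶜ, klTerm (p i) (q i) :=
          Finset.sum_le_sum fun i _ => sub_le_klTerm (hp i) (hq i) (hpq i)
  rw [← Finset.sum_add_sum_compl B]
  linarith

lemma neg_one_le_sum_klTerm (hp : 0 ≤ p) (hq : 0 ≤ q) (hq_sum : ∑ i, q i ≤ 1)
    (hpq : ∀ i, q i = 0 → p i = 0) : -1 ≤ ∑ i, klTerm (p i) (q i) := by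
  have := mul_sum_le_sum_klTerm_add_one hp hq hq_sum hpq (L := 0) (B := ∅) (by simp)
  linarith

lemma sum_le_exp_mul_add_div (hp : 0 ≤ p) (hq : 0 ≤ q) (hq_sum : ∑ i, q i ≤ 1)
    (hpq : ∀ i, q i = 0 → p i = 0) {L ε : ℝ} (hL : 0 < L) {F : Finset ι}
    (hF : ∑ i ∈ F, q i ≤ ε) :
    ∑ i ∈ F, p i ≤ exp L * ε + (∑ i, klTerm (p i) (q i) + 1) / L := by
  classical
  rw [← Finset.sum_filter_not_add_sum_filter F (fun i => exp L * q i ≤ p i)]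
  gcongr ?_ + ?_
  · calc ∑ i ∈ F with ¬exp L * q i ≤ p i, p i
        ≤ ∑ i ∈ F with ¬exp L * q i ≤ p i, exp L * q i :=
          Finset.sum_le_sum fun i hi => (not_le.1 (Finset.mem_filter.1 hi).2).le
      _ ≤ exp L * ∑ i ∈ F, q i := by
          rw [← Finset.mul_sum]
          gcongr
          exacts [fun i _ _ => hq i, Finset.filter_subset _ _]
      _ ≤ exp L * ε := by gcongr
  · rw [le_div_iff₀' hL]
    exact mul_sum_le_sum_klTerm_add_one hp hq hq_sum hpq fun i hi => (Finset.mem_filter.1 hi).2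

lemma sum_le_div_of_sum_le_exp_neg (hp : 0 ≤ p) (hq : 0 ≤ q) (hq_sum : ∑ i, q i ≤ 1)
    (hpq : ∀ i, q i = 0 → p i = 0) {L : ℝ} (hL : 0 < L) {F : Finset ι}
    (hF : ∑ i ∈ F, q i ≤ exp (-(2 * L + 1))) :
    ∑ i ∈ F, p i ≤ (∑ i, klTerm (p i) (q i) + 2) / L := by
  have h_exp : exp L * exp (-(2 * L + 1)) ≤ 1 / L := by
    rw [← exp_add, le_div_iff₀ hL, show L + -(2 * L + 1) = -(L + 1) by ring, exp_neg,
      ← div_eq_inv_mul, div_le_one (exp_pos _)]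
    linarith [add_one_le_exp (L + 1)]
  calc ∑ i ∈ F, p i ≤ exp L * exp (-(2 * L + 1)) + (∑ i, klTerm (p i) (q i) + 1) / L :=
        sum_le_exp_mul_add_div hp hq hq_sum hpq hL hF
    _ ≤ 1 / L + (∑ i, klTerm (p i) (q i) + 1) / L := by gcongr
    _ = (∑ i, klTerm (p i) (q i) + 2) / L := by ring

end FiniteDistributions

section Cylinders

variable {X : Type*} [MeasurableSpace X]

lemma measurableSet_cylSet [MeasurableSingletonClass X] {n : ℕ} (s : Fin n → X) :
    MeasurableSet (cylSet s) := by
  have h : cylSet s = ⋂ i : Fin n, (fun ω : ℕ → X => ω i) ⁻¹' {s i} := by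
    ext ω
    simp [cylSet]
  rw [h]
  exact MeasurableSet.iInter fun i => measurable_pi_apply _ (measurableSet_singleton _)

open Function in
lemma pairwise_disjoint_cylSet (n : ℕ) :
    Pairwise (Disjoint on (cylSet : (Fin n → X) → Set (ℕ → X))) := by
  intro s t hst
  obtain ⟨i, hi⟩ := Function.ne_iff.1 hst
  exact Set.disjoint_left.2 fun ω hs ht => hi ((hs i).symm.trans (ht i))

lemma sum_cylP_le_one [Fintype X] [MeasurableSingletonClass X] (ρ : Measure (ℕ → X))
    [IsProbabilityMeasure ρ] (n : ℕ) : ∑ s : Fin n → X, cylP ρ s ≤ 1 := by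
  have h : ∑ s : Fin n → X, ρ (cylSet s) ≤ 1 := by
    simpa using sum_measure_le_measure_univ (μ := ρ) (s := Finset.univ)
      (fun s _ => (measurableSet_cylSet s).nullMeasurableSet)
      fun s _ t _ hst => (pairwise_disjoint_cylSet n hst).aedisjoint
  change ∑ s : Fin n → X, (ρ (cylSet s)).toReal ≤ 1
  rw [← ENNReal.toReal_sum fun s _ => measure_ne_top ρ _]
  simpa using ENNReal.toReal_mono ENNReal.one_ne_top h

end Cylinders

section Divergence

variable {X : Type*} [Fintype X] [MeasurableSpace X] [MeasurableSingletonClass X]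
  (μ ρ : Measure (ℕ → X)) [IsProbabilityMeasure ρ]

lemma neg_one_le_klDn {n : ℕ} (hac : ∀ s : Fin n → X, cylP ρ s = 0 → cylP μ s = 0) :
    -1 ≤ klDn μ ρ n :=
  klDn_eq_sum_klTerm μ ρ n ▸ neg_one_le_sum_klTerm (fun _ => ENNReal.toReal_nonneg)
    (fun _ => ENNReal.toReal_nonneg) (sum_cylP_le_one ρ n) hac

lemma sum_cylP_le_klDn_add_two_div {n : ℕ}
    (hac : ∀ s : Fin n → X, cylP ρ s = 0 → cylP μ s = 0) {L : ℝ} (hL : 0 < L) {F : Finset (Fin n → X)}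
    (hF : ∑ s ∈ F, cylP ρ s ≤ Real.exp (-(2 * L + 1))) :
    ∑ s ∈ F, cylP μ s ≤ (klDn μ ρ n + 2) / L :=
  klDn_eq_sum_klTerm μ ρ n ▸ sum_le_div_of_sum_le_exp_neg (fun _ => ENNReal.toReal_nonneg)
    (fun _ => ENNReal.toReal_nonneg) (sum_cylP_le_one ρ n) hac hL hF

end Divergence

namespace Real

lemma sqrt_mul_div_self {x : ℝ} (hx : 0 ≤ x) (y : ℝ) : √(x * y) / x = √(y / x) := by
  rcases hx.eq_or_lt with rfl | hx
  · simp
  have hsx : √x ≠ 0 := (sqrt_pos.2 hx).ne'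
  rw [sqrt_mul hx.le, sqrt_div' _ hx.le]
  nth_rw 2 [← mul_self_sqrt hx.le]
  field_simp

lemma div_sqrt_mul {x y : ℝ} (hx : 0 ≤ x) (hy : 0 ≤ y) : y / √(x * y) = √(y / x) := by
  rcases hy.eq_or_lt with rfl | hy
  · simp
  rw [sqrt_mul hx, sqrt_div' _ hx]
  nth_rw 1 [← mul_self_sqrt hy.le]
  exact mul_div_mul_right _ _ (sqrt_pos.2 hy).ne'

end Real

open scoped Classical in
theorem exists_eps_mu_T_minus_S_tendsto_zero_general {X : Type*} [Fintype X]
    [MeasurableSpace X] [MeasurableSingletonClass X] (μ ρ : Measure (ℕ → X))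
    [IsProbabilityMeasure ρ]
    (hac : ∀ (n : ℕ) (s : Fin n → X), cylP ρ s = 0 → cylP μ s = 0)
    (hd : Tendsto (fun n => klDn μ ρ n / n) atTop (𝓝 0)) :
    ∃ ε : ℕ → ℝ, (∀ n, ε n ∈ Set.Ioo (0 : ℝ) 1) ∧
      Tendsto (fun n => -Real.log (ε n) / n) atTop (𝓝 0) ∧
      ∀ S : (n : ℕ) → Finset (Fin n → X),
        (∀ n, ∑ s ∈ (Finset.univ.filter
            (fun s : Fin n → X => (1 / (n : ℝ)) * cylP ρ s ≤ cylP μ s)) \ S n, cylP ρ s ≤ ε n) →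
        Tendsto (fun n => ∑ s ∈ (Finset.univ.filter
            (fun s : Fin n → X => (1 / (n : ℝ)) * cylP ρ s ≤ cylP μ s)) \ S n, cylP μ s)
          atTop (𝓝 0) := by
  set c : ℕ → ℝ := fun n => klDn μ ρ n + 2
  set L : ℕ → ℝ := fun n => √(n * c n)
  have hc_pos (n : ℕ) : 0 < c n := by linarith [neg_one_le_klDn μ ρ (hac n)]
  have hinv : Tendsto (fun n : ℕ => (n : ℝ)⁻¹) atTop (𝓝 0) := tendsto_inv_atTop_nhds_zero_nat
  have hr : Tendsto (fun n : ℕ => √(c n / n)) atTop (𝓝 0) := by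
    convert (hd.add (hinv.const_mul 2)).sqrt using 3 with n
    · simp only [c]
      ring
    · simp
  refine ⟨fun n => Real.exp (-(2 * L n + 1)), fun n => ⟨Real.exp_pos _, ?_⟩, ?_, fun S hS => ?_⟩
  · exact Real.exp_lt_one_iff.2 (by linarith [Real.sqrt_nonneg (n * c n)])
  · convert (hr.const_mul 2).add hinv using 2 with n
    · rw [Real.log_exp, neg_neg, add_div, mul_div_assoc,
        Real.sqrt_mul_div_self (Nat.cast_nonneg n), one_div]
    · simp
  · refine squeeze_zero' (Eventually.of_forall fun n => Finset.sum_nonneg fun s _ =>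
      ENNReal.toReal_nonneg) ?_ hr
    filter_upwards [eventually_gt_atTop 0] with n hn
    have hL : 0 < L n := Real.sqrt_pos.2 (mul_pos (Nat.cast_pos.2 hn) (hc_pos n))
    calc _ ≤ c n / L n := sum_cylP_le_klDn_add_two_div μ ρ (hac n) hL (hS n)
      _ = √(c n / n) := Real.div_sqrt_mul (Nat.cast_nonneg n) (hc_pos n).le

open scoped Classical in
/-- Key quantitative step of Theorem 2: if `d_n(μ,ρ) = o(n)`, then one can choose
`ε_n ∈ (0,1)` with `−log ε_n = o(n)` such that for any sets `S_n ⊆ X^n`, whenever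
`ρ(T_μ^n \ S_n) ≤ ε_n` for all `n`, it follows that `μ(T_μ^n \ S_n) → 0`. -/
theorem exists_eps_mu_T_minus_S_tendsto_zero {X : Type*} [Fintype X] [Nonempty X]
    [MeasurableSpace X] [MeasurableSingletonClass X] (μ ρ : Measure (ℕ → X))
    [IsProbabilityMeasure μ] [IsProbabilityMeasure ρ]
    (hac : ∀ (n : ℕ) (s : Fin n → X), cylP ρ s = 0 → cylP μ s = 0)
    (hd : Tendsto (fun n => klDn μ ρ n / n) atTop (𝓝 0)) :
    ∃ ε : ℕ → ℝ, (∀ n, ε n ∈ Set.Ioo (0 : ℝ) 1) ∧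
      Tendsto (fun n => -Real.log (ε n) / n) atTop (𝓝 0) ∧
      ∀ S : (n : ℕ) → Finset (Fin n → X),
        (∀ n, ∑ s ∈ (Finset.univ.filter
            (fun s : Fin n → X => (1 / (n : ℝ)) * cylP ρ s ≤ cylP μ s)) \ S n, cylP ρ s ≤ ε n) →
        Tendsto (fun n => ∑ s ∈ (Finset.univ.filter
            (fun s : Fin n → X => (1 / (n : ℝ)) * cylP ρ s ≤ cylP μ s)) \ S n, cylP μ s)
          atTop (𝓝 0) :=
  exists_eps_mu_T_minus_S_tendsto_zero_general μ ρ hac hd
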